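/- For all n ≥ 2, the number of permutations of {1,…,n} that avoid both consecutive patterns 132 and 231 (i.e., permutations with no occurrence of a consecutive factor π(i)π(i+1)π(i+2) order-isomorphic to 132 or 231) equals 2^{n-1}. -/

import Mathlib

abbrev NPCond (n : ℕ) (π : Equiv.Perm (Fin n)) : Prop :=
  ∀ (i : ℕ) (h : i + 2 < n),
    ¬(π ⟨i, Nat.lt_of_le_of_lt (Nat.le_add_right i 2) h⟩ < π ⟨i + 2, h⟩ ∧ π ⟨i + 2, h⟩ < π ⟨i + 1, Nat.lt_of_le_of_lt (Nat.add_le_add_left (Nat.le_succ 1) i) h⟩) ∧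
    ¬(π ⟨i + 2, h⟩ < π ⟨i, Nat.lt_of_le_of_lt (Nat.le_add_right i 2) h⟩ ∧ π ⟨i, Nat.lt_of_le_of_lt (Nat.le_add_right i 2) h⟩ < π ⟨i + 1, Nat.lt_of_le_of_lt (Nat.add_le_add_left (Nat.le_succ 1) i) h⟩)

def extPerm (n : ℕ) (b : Bool) (σ : Equiv.Perm (Fin n)) : Equiv.Perm (Fin (n + 1)) :=
  ((if b then finSuccEquivLast else finSuccEquiv n).trans
    (Equiv.optionCongr σ)).trans finSuccEquivLast.symm

@[simp] lemma extPerm_true_castSucc (n : ℕ) (σ : Equiv.Perm (Fin n)) (i : Fin n) :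
    extPerm n true σ i.castSucc = (σ i).castSucc := by
  simp [extPerm]

@[simp] lemma extPerm_true_last (n : ℕ) (σ : Equiv.Perm (Fin n)) :
    extPerm n true σ (Fin.last n) = Fin.last n := by
  simp [extPerm]

@[simp] lemma extPerm_false_zero (n : ℕ) (σ : Equiv.Perm (Fin n)) :
    extPerm n false σ 0 = Fin.last n := by
  simp [extPerm]

@[simp] lemma extPerm_false_succ (n : ℕ) (σ : Equiv.Perm (Fin n)) (i : Fin n) :
    extPerm n false σ i.succ = (σ i).castSucc := by
  simp [extPerm]

lemma mk_eq_castSucc {n j : ℕ} (hj : j < n) (h : j < n + 1) :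
    (⟨j, h⟩ : Fin (n + 1)) = Fin.castSucc ⟨j, hj⟩ := rfl

lemma mk_eq_succ {n j : ℕ} (hj : j < n) (h : j + 1 < n + 1) :
    (⟨j + 1, h⟩ : Fin (n + 1)) = Fin.succ ⟨j, hj⟩ := rfl

lemma npcond_extPerm (n : ℕ) (b : Bool) (σ : Equiv.Perm (Fin n)) (hσ : NPCond n σ) :
    NPCond (n + 1) (extPerm n b σ) := by
  cases b with
  | true =>
    intro i hi
    by_cases h2 : i + 2 < n
    · rw [mk_eq_castSucc (show i < n by omega), mk_eq_castSucc (show i + 1 < n by omega),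
        mk_eq_castSucc h2, extPerm_true_castSucc, extPerm_true_castSucc, extPerm_true_castSucc]
      simp only [Fin.castSucc_lt_castSucc_iff]
      exact hσ i h2
    · have hn : i + 2 = n := by omega
      rw [show (⟨i + 2, hi⟩ : Fin (n + 1)) = Fin.last n from Fin.ext hn, extPerm_true_last]
      constructor
      · rintro ⟨-, h2⟩; exact absurd h2 (Fin.not_lt.mpr (Fin.le_last _))
      · rintro ⟨h1, -⟩; exact absurd h1 (Fin.not_lt.mpr (Fin.le_last _))
  | false =>
    intro i hi
    match i with
    | 0 =>
      rw [show (⟨0, by omega⟩ : Fin (n + 1)) = 0 from rfl, extPerm_false_zero]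
      constructor
      · rintro ⟨h1, -⟩; exact absurd h1 (Fin.not_lt.mpr (Fin.le_last _))
      · rintro ⟨-, h2⟩; exact absurd h2 (Fin.not_lt.mpr (Fin.le_last _))
    | (k + 1) =>
      have hk : k + 2 < n := by omega
      rw [mk_eq_succ (show k < n by omega), mk_eq_succ (show k + 1 < n by omega),
        mk_eq_succ hk, extPerm_false_succ, extPerm_false_succ, extPerm_false_succ]
      simp only [Fin.castSucc_lt_castSucc_iff]
      exact hσ k hk

lemma extPerm_injective (n : ℕ) (hn : 1 ≤ n) :
    Function.Injective (fun p : Bool × Equiv.Perm (Fin n) => extPerm n p.1 p.2) := by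
  haveI : NeZero n := ⟨by omega⟩
  have hTrue : ∀ τ : Equiv.Perm (Fin n), extPerm n true τ 0 ≠ Fin.last n := by
    intro τ
    rw [show (0 : Fin (n + 1)) = Fin.castSucc 0 from rfl, extPerm_true_castSucc]
    exact (Fin.castSucc_lt_last _).ne
  rintro ⟨b, σ⟩ ⟨b', σ'⟩ h
  simp only at h
  have hb : b = b' := by
    cases b <;> cases b'
    · rfl
    · exfalso
      have h0 := Equiv.ext_iff.mp h 0
      rw [extPerm_false_zero] at h0
      exact hTrue σ' h0.symm
    · exfalso
      have h0 := Equiv.ext_iff.mp h 0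
      rw [extPerm_false_zero] at h0
      exact hTrue σ h0
    · rfl
  subst hb
  have hσ : σ = σ' := by
    apply Equiv.ext
    intro i
    cases b with
    | true =>
      have := Equiv.ext_iff.mp h i.castSucc
      rw [extPerm_true_castSucc, extPerm_true_castSucc] at this
      exact Fin.castSucc_inj.mp this
    | false =>
      have := Equiv.ext_iff.mp h i.succ
      rw [extPerm_false_succ, extPerm_false_succ] at this
      exact Fin.castSucc_inj.mp this
  rw [hσ]

set_option maxHeartbeats 1000000 in
lemma extPerm_surjective (n : ℕ) (π : Equiv.Perm (Fin (n + 1))) (hπ : NPCond (n + 1) π) :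
    ∃ b σ, NPCond n σ ∧ extPerm n b σ = π := by
  set q := π.symm (Fin.last n) with hqdef
  have hq : π q = Fin.last n := Equiv.apply_symm_apply _ _
  have hcases : q.val = 0 ∨ q.val = n ∨ (0 < q.val ∧ q.val < n) := by
    have := q.isLt; omega
  rcases hcases with h0 | hlastq | ⟨h1, h2⟩
  · -- q = 0 : max at front, b = false
    have hq0 : q = 0 := Fin.ext h0
    have hπ0 : π 0 = Fin.last n := by rw [← hq0]; exact hq
    have hne : ∀ i : Fin n, (π i.succ).val ≠ n := by
      intro i hv
      have he : π i.succ = Fin.last n := Fin.ext hv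
      have := π.injective (he.trans hπ0.symm)
      exact Fin.succ_ne_zero i this
    have hlt : ∀ i : Fin n, (π i.succ).val < n := by
      intro i; have := (π i.succ).isLt; have := hne i; omega
    let g : Fin n → Fin n := fun i => ⟨(π i.succ).val, hlt i⟩
    have hg : Function.Injective g := by
      intro a c hac
      have hv := congrArg Fin.val hac
      have h2 : π a.succ = π c.succ := Fin.ext hv
      exact Fin.succ_injective n (π.injective h2)
    let σ := Equiv.ofBijective g (Finite.injective_iff_bijective.mp hg)
    have key : ∀ a c : Fin n, (σ a < σ c ↔ π a.succ < π c.succ) := fun a c => Iff.rfl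
    refine ⟨false, σ, ?_, ?_⟩
    · intro i h
      simp only [key, Fin.succ_mk]
      exact hπ (i + 1) (by omega)
    · apply Equiv.ext
      intro x
      cases x using Fin.cases with
      | zero => rw [extPerm_false_zero, hπ0]
      | succ i =>
        rw [extPerm_false_succ]
        exact Fin.ext rfl
  · -- q = last : max at back, b = true
    have hql : q = Fin.last n := Fin.ext hlastq
    have hπl : π (Fin.last n) = Fin.last n := by
      have := hq; rw [hql] at this; exact this
    have hne : ∀ i : Fin n, (π i.castSucc).val ≠ n := by
      intro i hv
      have he : π i.castSucc = Fin.last n := Fin.ext hv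
      have := π.injective (he.trans hπl.symm)
      exact (Fin.castSucc_lt_last i).ne this
    have hlt : ∀ i : Fin n, (π i.castSucc).val < n := by
      intro i; have := (π i.castSucc).isLt; have := hne i; omega
    let g : Fin n → Fin n := fun i => ⟨(π i.castSucc).val, hlt i⟩
    have hg : Function.Injective g := by
      intro a c hac
      have hv := congrArg Fin.val hac
      have h2 : π a.castSucc = π c.castSucc := Fin.ext hv
      exact Fin.castSucc_injective n (π.injective h2)
    let σ := Equiv.ofBijective g (Finite.injective_iff_bijective.mp hg)
    have key : ∀ a c : Fin n, (σ a < σ c ↔ π a.castSucc < π c.castSucc) := fun a c => Iff.rfl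
    refine ⟨true, σ, ?_, ?_⟩
    · intro i h
      simp only [key, Fin.castSucc_mk]
      exact hπ i (by omega)
    · apply Equiv.ext
      intro x
      cases x using Fin.lastCases with
      | last => rw [extPerm_true_last, hπl]
      | cast i =>
        rw [extPerm_true_castSucc]
        exact Fin.ext rfl
  · -- interior : contradiction with no-peak
    exfalso
    have hi : (q.val - 1) + 2 < n + 1 := by omega
    obtain ⟨c1, c2⟩ := hπ (q.val - 1) hi
    have hmid : (⟨q.val - 1 + 1, by omega⟩ : Fin (n + 1)) = q := by
      apply Fin.ext; show q.val - 1 + 1 = q.val; omega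
    have hπmid : π ⟨q.val - 1 + 1, by omega⟩ = Fin.last n := by rw [hmid]; exact hq
    have hac : π ⟨q.val - 1, by omega⟩ ≠ π ⟨q.val - 1 + 2, hi⟩ := by
      intro h
      have h3 : q.val - 1 = q.val - 1 + 2 := congrArg Fin.val (π.injective h)
      omega
    have ha' : π ⟨q.val - 1, by omega⟩ < Fin.last n := by
      refine lt_of_le_of_ne (Fin.le_last _) (fun h => ?_)
      have h3 : q.val - 1 = q.val := congrArg Fin.val (π.injective (h.trans hq.symm))
      omega
    have hc' : π ⟨q.val - 1 + 2, hi⟩ < Fin.last n := by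
      refine lt_of_le_of_ne (Fin.le_last _) (fun h => ?_)
      have h3 : q.val - 1 + 2 = q.val := congrArg Fin.val (π.injective (h.trans hq.symm))
      omega
    rcases lt_or_gt_of_ne hac with hlt | hgt
    · exact c1 ⟨hlt, lt_of_lt_of_le hc' (le_of_eq hπmid.symm)⟩
    · exact c2 ⟨hgt, lt_of_lt_of_le ha' (le_of_eq hπmid.symm)⟩

lemma card_step (n : ℕ) (hn : 1 ≤ n) :
    Nat.card {π : Equiv.Perm (Fin (n + 1)) // NPCond (n + 1) π} =
      2 * Nat.card {σ : Equiv.Perm (Fin n) // NPCond n σ} := by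
  have hbij : Function.Bijective
      (fun p : Bool × {σ : Equiv.Perm (Fin n) // NPCond n σ} =>
        (⟨extPerm n p.1 p.2.1, npcond_extPerm n p.1 p.2.1 p.2.2⟩ :
          {π : Equiv.Perm (Fin (n + 1)) // NPCond (n + 1) π})) := by
    constructor
    · rintro ⟨b, σ, hσ⟩ ⟨b', σ', hσ'⟩ h
      have h2 : extPerm n b σ = extPerm n b' σ' := congrArg Subtype.val h
      have h3 : (b, σ) = (b', σ') := extPerm_injective n hn h2
      rw [Prod.mk.injEq] at h3
      obtain ⟨rfl, rfl⟩ := h3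
      rfl
    · rintro ⟨π, hπ⟩
      obtain ⟨b, σ, hσ, he⟩ := extPerm_surjective n π hπ
      exact ⟨(b, ⟨σ, hσ⟩), Subtype.ext he⟩
  rw [← Nat.card_eq_of_bijective _ hbij, Nat.card_prod, Nat.card_eq_fintype_card (α := Bool),
    Fintype.card_bool]

lemma card_two : Nat.card {π : Equiv.Perm (Fin 2) // NPCond 2 π} = 2 := by
  have e : {π : Equiv.Perm (Fin 2) // NPCond 2 π} ≃ Equiv.Perm (Fin 2) :=
    Equiv.subtypeUnivEquiv (fun π i h => by omega)
  rw [Nat.card_congr e, Nat.card_eq_fintype_card, Fintype.card_perm, Fintype.card_fin]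
  rfl

/-- For all n ≥ 2, the number of permutations of {1,…,n} avoiding the
consecutive patterns 132 and 231 (i.e. with no consecutive factor order-isomorphic to
132 or 231, equivalently no peak) equals 2^(n-1). -/
theorem consecutive_avoid_132_231_count (n : ℕ) (hn : 2 ≤ n) :
    Nat.card {π : Equiv.Perm (Fin n) //
      ∀ (i : ℕ) (h : i + 2 < n),
        -- no consecutive occurrence of 132: π(i) < π(i+2) < π(i+1)
        ¬(π ⟨i, by omega⟩ < π ⟨i + 2, h⟩ ∧ π ⟨i + 2, h⟩ < π ⟨i + 1, by omega⟩) ∧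
        -- no consecutive occurrence of 231: π(i+2) < π(i) < π(i+1)
        ¬(π ⟨i + 2, h⟩ < π ⟨i, by omega⟩ ∧ π ⟨i, by omega⟩ < π ⟨i + 1, by omega⟩)} =
      2 ^ (n - 1) := by
  induction n, hn using Nat.le_induction with
  | base => exact card_two
  | succ n hn ih =>
    have h1 : Nat.card {π : Equiv.Perm (Fin (n + 1)) // NPCond (n + 1) π} =
        2 * Nat.card {σ : Equiv.Perm (Fin n) // NPCond n σ} := card_step n (by omega)
    rw [show n + 1 - 1 = n from rfl]
    calc Nat.card {π : Equiv.Perm (Fin (n + 1)) // NPCond (n + 1) π}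
        = 2 * Nat.card {σ : Equiv.Perm (Fin n) // NPCond n σ} := h1
      _ = 2 * 2 ^ (n - 1) := by rw [ih]
      _ = 2 ^ n := by rw [← pow_succ']; congr 1; omega
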